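/- arXiv:2508.03808 — 2 statements merged into one kernel-verified Lean document; each statement's English description precedes it below -/
import Mathlib

section
/- Let ℍ denote the real quaternions and let m ≤ n be natural numbers. Equip ℍ^k with the ℓ² norm, i.e. the norm of PiLp 2 (fun _ : Fin k => ℍ), and regard it as an ℍ-module with componentwise scalar multiplication. Then the group of ℍ-linear isometric equivalences of ℍ^n acts transitively, by postcomposition, on the set of ℍ-linear isometric embeddings from ℍ^m to ℍ^n: for any two ℍ-linear isometries f, g : ℍ^m →ₗᵢ[ℍ] ℍ^n there exists an ℍ-linear isometric equivalence e : ℍ^n ≃ₗᵢ[ℍ] ℍ^n such that e ∘ f = g. -/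
/-!
Downward induction on `m`. If `m < n`, the image of an isometric embedding `f : ℍ^m → ℍ^n` is
a proper subspace, so some unit vector `u` is real-orthogonal to it; as `⟪x, q • y⟫ = ⟪q̄ • x, y⟫`,
the ℍ-line `ℍ u` is then orthogonal to the image too, and `x ↦ f (init x) + x_last • u` is an
isometric embedding `ℍ^(m+1) → ℍ^n` extending `f`. An isometry carrying the extension of `f`
to that of `g` carries `f` to `g`. For `m = n` isometric embeddings are onto, and `g ∘ f⁻¹` works.
-/

open Quaternion
open scoped RealInnerProductSpace

local notation:max "ℍ^" k:max => PiLp 2 (fun _ : Fin k => ℍ[ℝ])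

theorem Quaternion.re_mul_comm (a b : ℍ[ℝ]) : (a * b).re = (b * a).re := by
  simp only [re_mul]
  ring

theorem Quaternion.inner_mul_right_eq_inner_star_mul (q a b : ℍ[ℝ]) :
    ⟪a, q * b⟫ = ⟪star q * a, b⟫ := by
  rw [inner_def, inner_def, star_mul, ← mul_assoc, re_mul_comm, ← mul_assoc]

theorem PiLp.inner_quaternion_smul_right {ι : Type*} [Fintype ι]
    (q : ℍ[ℝ]) (x y : PiLp 2 (fun _ : ι => ℍ[ℝ])) : ⟪x, q • y⟫ = ⟪star q • x, y⟫ := by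
  simp only [PiLp.inner_apply, PiLp.smul_apply, smul_eq_mul,
    Quaternion.inner_mul_right_eq_inner_star_mul]

theorem Submodule.exists_norm_eq_one_mem_orthogonal {𝕜 E : Type*} [RCLike 𝕜]
    [NormedAddCommGroup E] [InnerProductSpace 𝕜 E] {K : Submodule 𝕜 E}
    [K.HasOrthogonalProjection] (hK : K ≠ ⊤) : ∃ u ∈ Kᗮ, ‖u‖ = 1 := by
  obtain ⟨x, hx, hx0⟩ := Submodule.exists_mem_ne_zero_of_ne_bot
    (mt Submodule.orthogonal_eq_bot_iff.mp hK)
  exact ⟨(‖x‖⁻¹ : 𝕜) • x, Kᗮ.smul_mem _ hx, norm_smul_inv_norm hx0⟩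

theorem PiLp.finrank_eq_card {K ι : Type*} [DivisionRing K] [Fintype ι] (p : ENNReal) :
    Module.finrank K (PiLp p (fun _ : ι => K)) = Fintype.card ι := by
  rw [(WithLp.linearEquiv p K (ι → K)).finrank_eq, Module.finrank_fintype_fun_eq_card]

variable {m n : ℕ}

noncomputable def LinearIsometry.snocOrthogonal (f : ℍ^m →ₗᵢ[ℍ[ℝ]] ℍ^n) (u : ℍ^n) (hu : ‖u‖ = 1)
    (hfu : ∀ x, ⟪f x, u⟫ = 0) : ℍ^(m+1) →ₗᵢ[ℍ[ℝ]] ℍ^n where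
  toFun x := f (WithLp.toLp 2 (Fin.init x.ofLp)) + x (Fin.last m) • u
  map_add' x y := by
    rw [add_add_add_comm, ← map_add, PiLp.add_apply, add_smul]
    rfl
  map_smul' q x := by
    rw [smul_add, ← map_smul, PiLp.smul_apply, smul_eq_mul, mul_smul]
    rfl
  norm_map' x := by
    have horth : ⟪f (WithLp.toLp 2 (Fin.init x.ofLp)), x (Fin.last m) • u⟫ = 0 := by
      rw [PiLp.inner_quaternion_smul_right, ← f.map_smul, hfu]
    dsimp only [LinearMap.coe_mk, AddHom.coe_mk]
    rw [← sq_eq_sq₀ (norm_nonneg _) (norm_nonneg _), norm_add_sq_real, horth, mul_zero, add_zero,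
      f.norm_map, norm_smul, hu, mul_one, PiLp.norm_sq_eq_of_L2, PiLp.norm_sq_eq_of_L2,
      Fin.sum_univ_castSucc]
    rfl

theorem LinearIsometry.snocOrthogonal_apply_snoc_zero (f : ℍ^m →ₗᵢ[ℍ[ℝ]] ℍ^n) (u : ℍ^n)
    (hu : ‖u‖ = 1) (hfu : ∀ x, ⟪f x, u⟫ = 0) (x : ℍ^m) :
    f.snocOrthogonal u hu hfu (WithLp.toLp 2 (Fin.snoc x.ofLp 0)) = f x := by
  simp [snocOrthogonal]

theorem LinearIsometry.exists_snoc_extension (hmn : m < n) (f : ℍ^m →ₗᵢ[ℍ[ℝ]] ℍ^n) :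
    ∃ f' : ℍ^(m+1) →ₗᵢ[ℍ[ℝ]] ℍ^n, ∀ x : ℍ^m, f' (WithLp.toLp 2 (Fin.snoc x.ofLp 0)) = f x := by
  have hrange : LinearMap.range f.toLinearMap ≠ ⊤ := by
    intro h
    have hle := LinearMap.finrank_range_le f.toLinearMap
    rw [h, finrank_top, PiLp.finrank_eq_card, PiLp.finrank_eq_card, Fintype.card_fin,
      Fintype.card_fin] at hle
    omega
  obtain ⟨u, hu_orth, hu⟩ := Submodule.exists_norm_eq_one_mem_orthogonal
    (K := (LinearMap.range f.toLinearMap).restrictScalars ℝ) (by simpa using hrange)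
  exact ⟨f.snocOrthogonal u hu fun x => hu_orth _ ⟨x, rfl⟩,
    f.snocOrthogonal_apply_snoc_zero u hu _⟩

theorem LinearIsometry.exists_linearIsometryEquiv_comp_eq {K E : Type*} [DivisionRing K]
    [NormedAddCommGroup E] [Module K E] [FiniteDimensional K E] (f g : E →ₗᵢ[K] E) :
    ∃ e : E ≃ₗᵢ[K] E, ⇑e ∘ ⇑f = ⇑g := by
  have hsurj (h : E →ₗᵢ[K] E) : Function.Surjective h :=
    LinearMap.injective_iff_surjective.mp h.injective
  refine ⟨(LinearIsometryEquiv.ofSurjective f (hsurj f)).symm.trans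
    (LinearIsometryEquiv.ofSurjective g (hsurj g)), funext fun x => ?_⟩
  simp only [Function.comp_apply, LinearIsometryEquiv.trans_apply]
  rw [← LinearIsometryEquiv.coe_ofSurjective f (hsurj f), LinearIsometryEquiv.symm_apply_apply]
  rfl

/-- The group of `ℍ`-linear isometric equivalences of `ℍ^n` (with the `ℓ²` norm of
`PiLp 2`) acts transitively, by postcomposition, on the `ℍ`-linear isometric embeddings
`ℍ^m →ₗᵢ[ℍ] ℍ^n` for `m ≤ n`. -/
theorem symplectic_group_transitive_on_stiefel (m n : ℕ) (hmn : m ≤ n)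
    (f g : PiLp 2 (fun _ : Fin m => ℍ[ℝ]) →ₗᵢ[ℍ[ℝ]] PiLp 2 (fun _ : Fin n => ℍ[ℝ])) :
    ∃ e : PiLp 2 (fun _ : Fin n => ℍ[ℝ]) ≃ₗᵢ[ℍ[ℝ]] PiLp 2 (fun _ : Fin n => ℍ[ℝ]),
      (⇑e ∘ ⇑f) = ⇑g := by
  revert f g
  induction hmn using Nat.decreasingInduction with
  | self => exact LinearIsometry.exists_linearIsometryEquiv_comp_eq
  | of_succ k hk ih =>
    intro f g
    obtain ⟨f', hf'⟩ := f.exists_snoc_extension hk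
    obtain ⟨g', hg'⟩ := g.exists_snoc_extension hk
    obtain ⟨e, he⟩ := ih f' g'
    refine ⟨e, funext fun x => ?_⟩
    simpa [hf', hg'] using congrFun he (WithLp.toLp 2 (Fin.snoc x.ofLp 0))
end

section
/- Let m ≤ n be natural numbers, and let ι : EuclideanSpace ℝ (Fin m) →ₗᵢ[ℝ] EuclideanSpace ℝ (Fin n) be the standard inclusion, given by (ι x) i = x ⟨i, h⟩ if h : (i : ℕ) < m and (ι x) i = 0 otherwise. Consider the action of the group G(n) of linear isometric equivalences of EuclideanSpace ℝ (Fin n) on linear isometries by postcomposition. Then the stabilizer subgroup { e ∈ G(n) | e ∘ ι = ι } is isomorphic, as a group, to the group G(n−m) of linear isometric equivalences of EuclideanSpace ℝ (Fin (n−m)). -/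
/-!
An isometry `e` fixing the range `K` of `ι` pointwise maps `Kᗮ` onto itself and, by
`e x = x_K + e x_⊥`, is determined by its restriction to `Kᗮ`; conversely every isometry of
`Kᗮ` extends through `E ≃ K × Kᗮ` by the identity on `K`. So the stabilizer is the isometry
group of `Kᗮ`, a Euclidean space of dimension `n - m` since `ι` is injective.
-/

/-- The stabilizer, inside the group of linear isometric equivalences of
`EuclideanSpace ℝ (Fin n)`, of a linear isometric embedding
`ι : EuclideanSpace ℝ (Fin m) →ₗᵢ[ℝ] EuclideanSpace ℝ (Fin n)` under the
postcomposition action. -/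
noncomputable def stabilizerOfInclusion {m n : ℕ}
    (ι : EuclideanSpace ℝ (Fin m) →ₗᵢ[ℝ] EuclideanSpace ℝ (Fin n)) :
    Subgroup (EuclideanSpace ℝ (Fin n) ≃ₗᵢ[ℝ] EuclideanSpace ℝ (Fin n)) where
  carrier := { e | ⇑e ∘ ⇑ι = ⇑ι }
  one_mem' := by
    funext x
    simp
  mul_mem' := by
    intro a b ha hb
    funext x
    have hbx := congrFun hb x
    have hax := congrFun ha x
    simp only [Function.comp_apply] at hbx hax ⊢
    simp only [LinearIsometryEquiv.coe_mul, Function.comp_apply]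
    rw [hbx]
    simpa using hax
  inv_mem' := by
    intro a ha
    funext x
    have hax := congrFun ha x
    simp only [Function.comp_apply] at hax ⊢
    simp only [LinearIsometryEquiv.coe_inv]
    have h2 : a.symm (a (ι x)) = ι x := a.symm_apply_apply _
    rw [hax] at h2
    exact h2

namespace LinearIsometryEquiv

variable {R E F : Type*} [Semiring R] [SeminormedAddCommGroup E] [Module R E]
  [SeminormedAddCommGroup F] [Module R F]

instance applyMulAction : MulAction (E ≃ₗᵢ[R] E) E where
  smul e x := e x
  one_smul _ := rfl
  mul_smul _ _ _ := rfl

@[simp]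
lemma smul_def (e : E ≃ₗᵢ[R] E) (x : E) : e • x = e x := rfl

def autCongr (φ : E ≃ₗᵢ[R] F) : (E ≃ₗᵢ[R] E) ≃* (F ≃ₗᵢ[R] F) where
  toFun e := (φ.symm.trans e).trans φ
  invFun e := (φ.trans e).trans φ.symm
  left_inv e := by ext; simp
  right_inv e := by ext; simp
  map_mul' e e' := by ext; simp

end LinearIsometryEquiv

namespace Submodule

variable {𝕜 E : Type*} [RCLike 𝕜] [NormedAddCommGroup E] [InnerProductSpace 𝕜 E]
  (K : Submodule 𝕜 E)

lemma map_eq_self_of_mem_fixingSubgroup {e : E ≃ₗᵢ[𝕜] E}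
    (he : e ∈ fixingSubgroup (E ≃ₗᵢ[𝕜] E) (K : Set E)) :
    K.map (e.toLinearEquiv : E →ₗ[𝕜] E) = K := by
  have hfix (x : E) (hx : x ∈ K) : e x = x := (mem_fixingSubgroup_iff _).1 he x hx
  ext x
  constructor
  · rintro ⟨y, hy, rfl⟩
    simpa [hfix y hy] using hy
  · intro hx
    exact ⟨x, hx, by simpa using hfix x hx⟩

lemma map_orthogonal_eq_self_of_mem_fixingSubgroup {e : E ≃ₗᵢ[𝕜] E}
    (he : e ∈ fixingSubgroup (E ≃ₗᵢ[𝕜] E) (K : Set E)) :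
    Kᗮ.map (e.toLinearEquiv : E →ₗ[𝕜] E) = Kᗮ := by
  rw [map_orthogonal_equiv, K.map_eq_self_of_mem_fixingSubgroup he]

noncomputable def restrictOrthogonal :
    fixingSubgroup (E ≃ₗᵢ[𝕜] E) (K : Set E) →* (Kᗮ ≃ₗᵢ[𝕜] Kᗮ) where
  toFun e := (e.1.submoduleMap Kᗮ).trans
    (LinearIsometryEquiv.ofEq _ _ (K.map_orthogonal_eq_self_of_mem_fixingSubgroup e.2))
  map_one' := rfl
  map_mul' _ _ := rfl

@[simp]
lemma coe_restrictOrthogonal_apply (e : fixingSubgroup (E ≃ₗᵢ[𝕜] E) (K : Set E)) (v : Kᗮ) :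
    (K.restrictOrthogonal e v : E) = e.1 v := rfl

variable [K.HasOrthogonalProjection]

noncomputable def extendOrthogonal (g : Kᗮ ≃ₗᵢ[𝕜] Kᗮ) : E ≃ₗᵢ[𝕜] E :=
  K.orthogonalDecomposition.trans <|
    (LinearIsometryEquiv.withLpProdCongr 2 (.refl 𝕜 K) g).trans K.orthogonalDecomposition.symm

lemma extendOrthogonal_apply (g : Kᗮ ≃ₗᵢ[𝕜] Kᗮ) (x : E) :
    K.extendOrthogonal g x =
      K.orthogonalProjectionOnto x + g (Kᗮ.orthogonalProjectionOnto x) := by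
  simp [extendOrthogonal]

lemma extendOrthogonal_mem_fixingSubgroup (g : Kᗮ ≃ₗᵢ[𝕜] Kᗮ) :
    K.extendOrthogonal g ∈ fixingSubgroup (E ≃ₗᵢ[𝕜] E) (K : Set E) := by
  rw [mem_fixingSubgroup_iff]
  intro x hx
  simp [extendOrthogonal_apply, orthogonalProjectionOnto_mem_subspace_eq_self (⟨x, hx⟩ : K),
    orthogonalProjectionOnto_orthogonal_apply_eq_zero hx]

lemma extendOrthogonal_apply_of_mem_orthogonal (g : Kᗮ ≃ₗᵢ[𝕜] Kᗮ) (v : Kᗮ) :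
    K.extendOrthogonal g v = g v := by
  simp [extendOrthogonal_apply, (K.starProjection_apply_eq_zero_iff).2 v.2]

lemma apply_eq_of_mem_fixingSubgroup {e : E ≃ₗᵢ[𝕜] E}
    (he : e ∈ fixingSubgroup (E ≃ₗᵢ[𝕜] E) (K : Set E)) (x : E) :
    e x = K.orthogonalProjectionOnto x + e (Kᗮ.orthogonalProjectionOnto x) := by
  have hfix : e (K.orthogonalProjectionOnto x) = K.orthogonalProjectionOnto x :=
    (mem_fixingSubgroup_iff _).1 he _ (K.orthogonalProjectionOnto x).2
  conv_lhs => rw [← K.starProjection_add_starProjection_orthogonal x]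
  rw [map_add, ← coe_orthogonalProjectionOnto_apply, ← coe_orthogonalProjectionOnto_apply, hfix]

noncomputable def fixingSubgroupEquivOrthogonal :
    fixingSubgroup (E ≃ₗᵢ[𝕜] E) (K : Set E) ≃* (Kᗮ ≃ₗᵢ[𝕜] Kᗮ) where
  __ := K.restrictOrthogonal
  invFun g := ⟨K.extendOrthogonal g, K.extendOrthogonal_mem_fixingSubgroup g⟩
  left_inv e := by
    ext x
    change K.extendOrthogonal (K.restrictOrthogonal e) x = e.1 x
    rw [extendOrthogonal_apply, coe_restrictOrthogonal_apply,
      ← K.apply_eq_of_mem_fixingSubgroup e.2]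
  right_inv g := by
    ext v
    simp [extendOrthogonal_apply_of_mem_orthogonal]

end Submodule

open Module in
lemma LinearIsometry.finrank_orthogonal_range {𝕜 E F : Type*} [RCLike 𝕜] [NormedAddCommGroup E]
    [InnerProductSpace 𝕜 E] [NormedAddCommGroup F] [InnerProductSpace 𝕜 F] [FiniteDimensional 𝕜 F]
    (ι : E →ₗᵢ[𝕜] F) :
    finrank 𝕜 (LinearMap.range ι.toLinearMap)ᗮ = finrank 𝕜 F - finrank 𝕜 E := by
  rw [← (LinearMap.range ι.toLinearMap).finrank_add_finrank_orthogonal,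
    LinearMap.finrank_range_of_inj ι.injective, Nat.add_sub_cancel_left]

lemma stabilizerOfInclusion_eq_fixingSubgroup {m n : ℕ}
    (ι : EuclideanSpace ℝ (Fin m) →ₗᵢ[ℝ] EuclideanSpace ℝ (Fin n)) :
    stabilizerOfInclusion ι =
      fixingSubgroup _ (LinearMap.range ι.toLinearMap : Set (EuclideanSpace ℝ (Fin n))) := by
  ext e
  simp [stabilizerOfInclusion, mem_fixingSubgroup_iff, funext_iff]

theorem stabilizer_of_standard_inclusion_iso_general (m n : ℕ)
    (ι : EuclideanSpace ℝ (Fin m) →ₗᵢ[ℝ] EuclideanSpace ℝ (Fin n)) :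
    Nonempty ((stabilizerOfInclusion ι) ≃*
      (EuclideanSpace ℝ (Fin (n - m)) ≃ₗᵢ[ℝ] EuclideanSpace ℝ (Fin (n - m)))) := by
  set K := LinearMap.range ι.toLinearMap
  have hdim : Module.finrank ℝ Kᗮ = n - m := by simp [K, ι.finrank_orthogonal_range]
  let φ : Kᗮ ≃ₗᵢ[ℝ] EuclideanSpace ℝ (Fin (n - m)) :=
    ((stdOrthonormalBasis ℝ Kᗮ).reindex (finCongr hdim)).repr
  exact ⟨(MulEquiv.subgroupCongr (stabilizerOfInclusion_eq_fixingSubgroup ι)).trans <|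
    K.fixingSubgroupEquivOrthogonal.trans φ.autCongr⟩

/-- For `m ≤ n` and `ι` the standard inclusion `ℝ^m → ℝ^n`, the stabilizer of `ι` in
the group `G(n)` of linear isometric equivalences of `EuclideanSpace ℝ (Fin n)` (acting
by postcomposition) is isomorphic, as a group, to the group `G(n - m)` of linear
isometric equivalences of `EuclideanSpace ℝ (Fin (n - m))`. -/
theorem stabilizer_of_standard_inclusion_iso (m n : ℕ) (hmn : m ≤ n)
    (ι : EuclideanSpace ℝ (Fin m) →ₗᵢ[ℝ] EuclideanSpace ℝ (Fin n))
    (hι : ∀ (x : EuclideanSpace ℝ (Fin m)) (i : Fin n),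
      ι x i = if h : (i : ℕ) < m then x ⟨(i : ℕ), h⟩ else 0) :
    Nonempty ((stabilizerOfInclusion ι) ≃*
      (EuclideanSpace ℝ (Fin (n - m)) ≃ₗᵢ[ℝ] EuclideanSpace ℝ (Fin (n - m)))) :=
  stabilizer_of_standard_inclusion_iso_general m n ι
end
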